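/- arXiv:1010.1653 — 3 statements merged into one kernel-verified Lean document; each statement's English description precedes it below -/
import Mathlib

section
/- Let m ≥ 2 be an integer, R₀ > 0 and λ > 0 real numbers, and g : [R₀, ∞) → ℝ a continuously differentiable function with g(r) > 0 for all r ≥ R₀, such that ∫_{R₀}^∞ g(t)^{1-m} dt = +∞. Let h : [R₀, ∞) → ℝ be a bounded, twice continuously differentiable function with h(r) > 0 for all r ≥ R₀ and h''(r) + (m-1)·(g'(r)/g(r))·h'(r) = λ·h(r) for all r ≥ R₀. Then for every r ≥ R₀ the function t ↦ g(t)^{m-1}·h(t) is Lebesgue integrable on [r, ∞) and −g(r)^{m-1}·h'(r) = λ·∫_r^∞ g(t)^{m-1}·h(t) dt. -/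
open Set MeasureTheory Filter Topology

/-!
The flux `F = g^{m-1} h'` has derivative `λ g^{m-1} h > 0`, so it is nondecreasing. Since
`h' = F / g^{m-1}` and `∫ g^{1-m} = ∞`, a flux eventually `≥ c > 0` would make `h` unbounded,
and a flux `≤ -c < 0` would drive `h` to `-∞`. Hence `F` increases to `0`, and integrating
`F' = λ g^{m-1} h` over `[r, ∞)` gives both the integrability and the identity.
-/

theorem hasDerivAt_pow_mul_deriv_of_ode {g u : ℝ → ℝ} {n : ℕ} {lam t : ℝ}
    (hg : DifferentiableAt ℝ g t) (hgt : g t ≠ 0) (hu : DifferentiableAt ℝ (deriv u) t)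
    (hode : deriv (deriv u) t + n * (deriv g t / g t) * deriv u t = lam * u t) :
    HasDerivAt (fun x => g x ^ n * deriv u x) (lam * (g t ^ n * u t)) t := by
  refine ((hg.hasDerivAt.fun_pow n).fun_mul hu.hasDerivAt).congr_deriv ?_
  rw [show lam * (g t ^ n * u t) = g t ^ n * (lam * u t) by ring, ← hode]
  rcases n with _ | n
  · simp
  · field_simp
    push_cast
    ring

theorem continuousOn_deriv_Ici {u : ℝ → ℝ} {a : ℝ} (hu : ContDiffOn ℝ 1 u (Ici a))
    (ha : deriv u a = 0 → deriv (deriv u) a ≠ 0) : ContinuousOn (deriv u) (Ici a) := by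
  have hcont := hu.continuousOn_derivWithin (uniqueDiffOn_Ici a) le_rfl
  have hinterior : ∀ s ∈ Ioi a, derivWithin u (Ici a) s = deriv u s := fun s hs =>
    derivWithin_of_mem_nhds (Ici_mem_nhds hs)
  intro t ht
  rcases (mem_Ici.1 ht).eq_or_lt with rfl | ht
  · by_cases hd : DifferentiableAt ℝ u a
    · have heq : ∀ s ∈ Ici a, deriv u s = derivWithin u (Ici a) s := by
        intro s hs
        rcases (mem_Ici.1 hs).eq_or_lt with rfl | hs
        · exact (hd.derivWithin (uniqueDiffOn_Ici _ _ self_mem_Ici)).symm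
        · exact (hinterior s hs).symm
      exact (hcont a self_mem_Ici).congr heq (heq a self_mem_Ici)
    · have h2 : DifferentiableAt ℝ (deriv u) a := by
        by_contra h2
        exact ha (deriv_zero_of_not_differentiableAt hd) (deriv_zero_of_not_differentiableAt h2)
      exact h2.continuousAt.continuousWithinAt
  · refine (hcont t ht.le).congr_of_eventuallyEq ?_ (hinterior t ht).symm
    filter_upwards [nhdsWithin_le_nhds (Ioi_mem_nhds ht)] with s hs
    exact (hinterior s hs).symm

theorem tendsto_intervalIntegral_atTop_of_not_integrableOn {ψ : ℝ → ℝ} {a b : ℝ}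
    (hψ : ContinuousOn ψ (Ici a)) (hψ_nonneg : ∀ t ∈ Ici a, 0 ≤ ψ t)
    (hint : ¬ IntegrableOn ψ (Ici a)) (hab : a ≤ b) :
    Tendsto (fun x => ∫ t in b..x, ψ t) atTop atTop := by
  have hloc : ∀ x y, a ≤ x → a ≤ y → IntervalIntegrable ψ volume x y := fun x y hx hy =>
    (hψ.mono fun s hs => le_trans (le_min hx hy) hs.1).intervalIntegrable
  suffices hbase : Tendsto (fun x => ∫ t in a..x, ψ t) atTop atTop by
    refine (tendsto_atTop_add_const_right _ (-∫ t in a..b, ψ t) hbase).congr' ?_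
    filter_upwards [eventually_ge_atTop a] with x hx
    rw [← sub_eq_add_neg, intervalIntegral.integral_interval_sub_left (hloc a x le_rfl hx)
      (hloc a b le_rfl hab)]
  rw [integrableOn_Ici_iff_integrableOn_Ioi] at hint
  rw [tendsto_atTop_atTop]
  intro M
  by_contra! hM
  refine hint (integrableOn_Ioi_of_intervalIntegral_norm_bounded M a
    (fun x => ?_) tendsto_id ?_)
  · exact (hψ.mono Icc_subset_Ici_self).integrableOn_Icc.mono_set Ioc_subset_Icc_self
  filter_upwards [eventually_ge_atTop a] with x hx
  obtain ⟨y, hxy, hy⟩ := hM x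
  calc ∫ t in a..id x, ‖ψ t‖ = ∫ t in a..x, ψ t :=
        intervalIntegral.integral_congr fun s hs =>
          Real.norm_of_nonneg (hψ_nonneg s (le_trans (le_min le_rfl hx) hs.1))
    _ ≤ ∫ t in a..y, ψ t :=
        intervalIntegral.integral_mono_interval le_rfl hx hxy
          ((ae_restrict_iff' measurableSet_Ioc).2 (.of_forall fun s hs => hψ_nonneg s hs.1.le))
          (hloc a y le_rfl (hx.trans hxy))
    _ ≤ M := hy.le

theorem tendsto_atTop_of_const_mul_le_deriv {u u' ψ : ℝ → ℝ} {b c : ℝ} (hc : 0 < c)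
    (hu : ContinuousOn u (Ici b)) (hu' : ∀ t ∈ Ioi b, HasDerivAt u (u' t) t)
    (hψ : ContinuousOn ψ (Ici b)) (hle : ∀ t ∈ Ioi b, c * ψ t ≤ u' t)
    (hdiv : Tendsto (fun x => ∫ t in b..x, ψ t) atTop atTop) : Tendsto u atTop atTop := by
  have hlower : ∀ x ≥ b, u b + c * ∫ t in b..x, ψ t ≤ u x := by
    intro x hx
    have := intervalIntegral.integral_le_sub_of_hasDeriv_right_of_le hx
      (hu.mono Icc_subset_Ici_self) (fun t ht => (hu' t ht.1).hasDerivWithinAt)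
      ((hψ.mono Icc_subset_Ici_self).integrableOn_Icc.const_mul c) (fun t ht => hle t ht.1)
    rw [intervalIntegral.integral_const_mul] at this
    linarith
  refine tendsto_atTop_mono' atTop ?_
    (tendsto_atTop_add_const_left atTop (u b) (hdiv.const_mul_atTop hc))
  filter_upwards [eventually_ge_atTop b] with x hx using hlower x hx

theorem MonotoneOn.exists_tendsto_atTop_of_le {f : ℝ → ℝ} {a C : ℝ}
    (hf : MonotoneOn f (Ici a)) (hC : ∀ x ∈ Ici a, f x ≤ C) :
    ∃ l, Tendsto f atTop (𝓝 l) := by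
  have hmono : Monotone fun x => f (max a x) := fun x y hxy =>
    hf (le_max_left a x) (le_max_left a y) (max_le_max le_rfl hxy)
  refine ⟨_, (tendsto_atTop_ciSup hmono ⟨C, ?_⟩).congr' ?_⟩
  · rintro _ ⟨x, rfl⟩
    exact hC _ (le_max_left a x)
  · filter_upwards [eventually_ge_atTop a] with x hx
    rw [max_eq_right hx]

theorem tendsto_mul_deriv_atTop_zero_of_monotoneOn {u u' w : ℝ → ℝ} {a C c : ℝ}
    (hu : ContinuousOn u (Ici a)) (hu' : ∀ t ∈ Ioi a, HasDerivAt u (u' t) t)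
    (hub : ∀ t ∈ Ici a, u t ≤ C) (hlb : ∀ t ∈ Ici a, c ≤ u t)
    (hw : ContinuousOn w (Ici a)) (hw_pos : ∀ t ∈ Ici a, 0 < w t)
    (hw_int : ¬ IntegrableOn (fun t => (w t)⁻¹) (Ici a))
    (hmono : MonotoneOn (fun t => w t * u' t) (Ici a)) :
    Tendsto (fun t => w t * u' t) atTop (𝓝 0) := by
  have hψ : ContinuousOn (fun t => (w t)⁻¹) (Ici a) := hw.inv₀ fun t ht => (hw_pos t ht).ne'
  have hdiv : ∀ b ∈ Ici a, Tendsto (fun x => ∫ t in b..x, (w t)⁻¹) atTop atTop :=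
    fun b hb => tendsto_intervalIntegral_atTop_of_not_integrableOn hψ
      (fun t ht => (inv_pos.2 (hw_pos t ht)).le) hw_int hb
  have hnonpos : ∀ b ∈ Ici a, w b * u' b ≤ 0 := by
    intro b hb
    by_contra! hpos
    have hderiv_lower : ∀ t ∈ Ioi b, w b * u' b * (w t)⁻¹ ≤ u' t := fun t ht => by
      have hwt := hw_pos t (mem_Ici.2 (hb.trans ht.le))
      rw [← div_eq_mul_inv, div_le_iff₀ hwt, mul_comm (u' t)]
      exact hmono hb (mem_Ici.2 (hb.trans ht.le)) ht.le
    have hT := tendsto_atTop_of_const_mul_le_deriv hpos (hu.mono (Ici_subset_Ici.2 hb))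
      (fun t ht => hu' t (mem_Ioi.2 (lt_of_le_of_lt hb ht))) (hψ.mono (Ici_subset_Ici.2 hb))
      hderiv_lower (hdiv b hb)
    obtain ⟨t, ht, hCt⟩ := ((eventually_ge_atTop b).and (hT.eventually_gt_atTop C)).exists
    exact (hub t (hb.trans ht)).not_gt hCt
  obtain ⟨l, hl⟩ := hmono.exists_tendsto_atTop_of_le hnonpos
  have hle_l : ∀ t ∈ Ici a, w t * u' t ≤ l := fun t ht => ge_of_tendsto hl <| by
    filter_upwards [eventually_ge_atTop t] with x hx using hmono ht (ht.trans hx) hx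
  have hl_nonpos : l ≤ 0 := le_of_tendsto hl <| by
    filter_upwards [eventually_ge_atTop a] with x hx using hnonpos x hx
  obtain rfl | hl_neg := hl_nonpos.eq_or_lt
  · exact hl
  have hderiv_upper : ∀ t ∈ Ioi a, -l * (w t)⁻¹ ≤ -u' t := fun t ht => by
    have hwt := hw_pos t (mem_Ici.2 ht.le)
    rw [neg_mul, neg_le_neg_iff, ← div_eq_mul_inv, le_div_iff₀ hwt, mul_comm (u' t)]
    exact hle_l t (mem_Ici.2 ht.le)
  have hT := tendsto_atTop_of_const_mul_le_deriv (neg_pos.2 hl_neg) hu.neg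
    (fun t ht => (hu' t ht).neg) hψ hderiv_upper (hdiv a self_mem_Ici)
  obtain ⟨t, ht, hct⟩ := ((eventually_ge_atTop a).and (hT.eventually_gt_atTop (-c))).exists
  exact ((hlb t ht).not_gt (neg_lt_neg_iff.1 hct)).elim

theorem integrableOn_Ici_and_neg_eq_integral_of_tendsto_zero {F φ : ℝ → ℝ} {r lam : ℝ}
    (hlam : 0 < lam) (hF : ContinuousWithinAt F (Ici r) r)
    (hF' : ∀ t ∈ Ioi r, HasDerivAt F (lam * φ t) t) (hφ : ∀ t ∈ Ioi r, 0 ≤ φ t)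
    (hlim : Tendsto F atTop (𝓝 0)) :
    IntegrableOn φ (Ici r) ∧ -F r = lam * ∫ t in Ici r, φ t := by
  have hnonneg : ∀ t ∈ Ioi r, 0 ≤ lam * φ t := fun t ht => mul_nonneg hlam.le (hφ t ht)
  have hint := integrableOn_Ioi_deriv_of_nonneg hF hF' hnonneg hlim
  have heq := integral_Ioi_of_hasDerivAt_of_nonneg hF hF' hnonneg hlim
  rw [IntegrableOn, integrable_const_mul_iff (isUnit_iff_ne_zero.2 hlam.ne')] at hint
  refine ⟨by rwa [integrableOn_Ici_iff_integrableOn_Ioi], ?_⟩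
  rw [integral_Ici_eq_integral_Ioi, ← integral_const_mul, heq, zero_sub]

theorem stmt_4_general (m : ℕ) (hm : 2 ≤ m) (R₀ lam : ℝ) (hlam : 0 < lam)
    (g h : ℝ → ℝ)
    (hg : ContDiffOn ℝ 1 g (Set.Ici R₀))
    (hgpos : ∀ r ∈ Set.Ici R₀, 0 < g r)
    (hgint : ¬ MeasureTheory.IntegrableOn (fun t => (g t ^ (m - 1))⁻¹) (Set.Ici R₀))
    (hbdd : ∃ C : ℝ, ∀ r ∈ Set.Ici R₀, h r ≤ C)
    (hh : ContDiffOn ℝ 2 h (Set.Ici R₀))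
    (hhpos : ∀ r ∈ Set.Ici R₀, 0 < h r)
    (hode : ∀ r ∈ Set.Ici R₀,
      deriv (deriv h) r + ((m : ℝ) - 1) * (deriv g r / g r) * deriv h r = lam * h r) :
    ∀ r ∈ Set.Ici R₀,
      MeasureTheory.IntegrableOn (fun t => g t ^ (m - 1) * h t) (Set.Ici r) ∧
      -(g r ^ (m - 1) * deriv h r) = lam * ∫ t in Set.Ici r, g t ^ (m - 1) * h t := by
  obtain ⟨C, hC⟩ := hbdd
  have hcast : ((m - 1 : ℕ) : ℝ) = (m : ℝ) - 1 := by
    rw [Nat.cast_sub (by omega), Nat.cast_one]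
  -- `deriv h R₀` is a two-sided derivative, hence the junk value `0` unless `h` is
  -- differentiable at `R₀`; the equation excludes `h' = h'' = 0` there.
  have hh' : ContinuousOn (deriv h) (Ici R₀) :=
    continuousOn_deriv_Ici (hh.of_le one_le_two) fun h₁ h₂ =>
      (mul_pos hlam (hhpos R₀ self_mem_Ici)).ne'
        (by simpa [h₁, h₂] using (hode R₀ self_mem_Ici).symm)
  have hh'' : ContDiffOn ℝ 1 (deriv h) (Ioi R₀) :=
    (hh.mono Ioi_subset_Ici_self).deriv_of_isOpen isOpen_Ioi (by norm_num)
  have hF' : ∀ t ∈ Ioi R₀, HasDerivAt (fun x => g x ^ (m - 1) * deriv h x)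
      (lam * (g t ^ (m - 1) * h t)) t := fun t ht =>
    hasDerivAt_pow_mul_deriv_of_ode
      ((hg.contDiffAt (Ici_mem_nhds ht)).differentiableAt one_ne_zero)
      (hgpos t (mem_Ici.2 ht.le)).ne'
      ((hh''.differentiableOn one_ne_zero).differentiableAt (isOpen_Ioi.mem_nhds ht))
      (by rw [hcast]; exact hode t (mem_Ici.2 ht.le))
  have hFc : ContinuousOn (fun x => g x ^ (m - 1) * deriv h x) (Ici R₀) :=
    (hg.continuousOn.pow _).mul hh'
  have hφ : ∀ t ∈ Ici R₀, 0 ≤ g t ^ (m - 1) * h t := fun t ht =>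
    mul_nonneg (pow_pos (hgpos t ht) _).le (hhpos t ht).le
  have hmono : MonotoneOn (fun x => g x ^ (m - 1) * deriv h x) (Ici R₀) :=
    monotoneOn_of_hasDerivWithinAt_nonneg (convex_Ici R₀) hFc
      (by rw [interior_Ici]; exact fun t ht => (hF' t ht).hasDerivWithinAt)
      (by rw [interior_Ici]; exact fun t ht => mul_nonneg hlam.le (hφ t (mem_Ici.2 ht.le)))
  have hlim := tendsto_mul_deriv_atTop_zero_of_monotoneOn hh.continuousOn
    (fun t ht => ((hh.contDiffAt (Ici_mem_nhds ht)).differentiableAt two_ne_zero).hasDerivAt)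
    hC (fun t ht => (hhpos t ht).le) (hg.continuousOn.pow _) (fun t ht => pow_pos (hgpos t ht) _)
    hgint hmono
  intro r hr
  exact integrableOn_Ici_and_neg_eq_integral_of_tendsto_zero hlam
    ((hFc r hr).mono (Ici_subset_Ici.2 hr))
    (fun t ht => hF' t (mem_Ioi.2 (lt_of_le_of_lt hr ht)))
    (fun t ht => hφ t (mem_Ici.2 (hr.trans ht.le))) hlim

/-- under the parabolicity hypothesis, for a bounded positive solution
of `h'' + (m-1)(g'/g)h' = λ h`, the function `g^{m-1} h` is integrable on each
`[r,∞)` and `-g(r)^{m-1} h'(r) = λ ∫_r^∞ g^{m-1} h`. -/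
theorem stmt_4 (m : ℕ) (hm : 2 ≤ m) (R₀ lam : ℝ) (hR₀ : 0 < R₀) (hlam : 0 < lam)
    (g h : ℝ → ℝ)
    (hg : ContDiffOn ℝ 1 g (Set.Ici R₀))
    (hgpos : ∀ r ∈ Set.Ici R₀, 0 < g r)
    (hgint : ¬ MeasureTheory.IntegrableOn (fun t => (g t ^ (m - 1))⁻¹) (Set.Ici R₀))
    (hbdd : ∃ C : ℝ, ∀ r ∈ Set.Ici R₀, h r ≤ C)
    (hh : ContDiffOn ℝ 2 h (Set.Ici R₀))
    (hhpos : ∀ r ∈ Set.Ici R₀, 0 < h r)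
    (hode : ∀ r ∈ Set.Ici R₀,
      deriv (deriv h) r + ((m : ℝ) - 1) * (deriv g r / g r) * deriv h r = lam * h r) :
    ∀ r ∈ Set.Ici R₀,
      MeasureTheory.IntegrableOn (fun t => g t ^ (m - 1) * h t) (Set.Ici r) ∧
      -(g r ^ (m - 1) * deriv h r) = lam * ∫ t in Set.Ici r, g t ^ (m - 1) * h t :=
  stmt_4_general m hm R₀ lam hlam g h hg hgpos hgint hbdd hh hhpos hode
end

section
/- Let m ≥ 2 be an integer, R₀ > 0 and λ > 0 real numbers, and g : [R₀, ∞) → ℝ a continuously differentiable function with g(r) > 0 for all r ≥ R₀. Assume that ∫_{R₀}^∞ g(t)^{1-m} dt = +∞, that g^{m-1} is Lebesgue integrable on [R₀, ∞), and that ∫_{R₀}^∞ (∫_r^∞ g(t)^{m-1} dt) / g(r)^{m-1} dr = +∞. Let h : [R₀, ∞) → ℝ be a bounded, twice continuously differentiable function with h(r) > 0 for all r ≥ R₀ and h''(r) + (m-1)·(g'(r)/g(r))·h'(r) = λ·h(r) for all r ≥ R₀. Then h(r) → 0 as r → +∞. -/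
open Set MeasureTheory Filter Topology

/-!
Write `w = g^(m-1)`. The equation says `(w h')' = λ w h ≥ 0`, so the flux `w h'` is nondecreasing.
If it were ever positive, then `h' ≥ c / w` from there on with `c > 0`, and boundedness of `h`
would make `1 / w` integrable; hence `w h' ≤ 0` and `h` decreases. If `h ≥ ε > 0` throughout,
integrating `(w h')' ≥ λ ε w` from `r` to `∞` gives `-h'(r) ≥ λ ε (∫_r^∞ w) / w(r)`, and
integrating once more, with `h > 0`, makes this ratio integrable. So `h` decreases to `0`.
-/

section Comparison

variable {f F F' : ℝ → ℝ} {a : ℝ}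

theorem integrableOn_Ioc_of_le_deriv (hF : ContinuousOn F (Ici a))
    (hderiv : ∀ x ∈ Ioi a, HasDerivAt F (F' x) x)
    (hf : AEStronglyMeasurable f (volume.restrict (Ioi a)))
    (hf0 : ∀ x ∈ Ioi a, 0 ≤ f x) (hfF : ∀ x ∈ Ioi a, f x ≤ F' x) (b : ℝ) :
    IntegrableOn f (Ioc a b) := by
  have hF' : IntegrableOn F' (Ioc a b) :=
    intervalIntegral.integrableOn_deriv_of_nonneg (hF.mono Icc_subset_Ici_self)
      (fun x hx => hderiv x hx.1) fun x hx => (hf0 x hx.1).trans (hfF x hx.1)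
  refine hF'.mono' (hf.mono_measure (Measure.restrict_mono Ioc_subset_Ioi_self le_rfl)) ?_
  filter_upwards [ae_restrict_mem measurableSet_Ioc] with x hx
  rw [Real.norm_of_nonneg (hf0 x hx.1)]
  exact hfF x hx.1

theorem intervalIntegral_le_sub_of_le_deriv (hF : ContinuousOn F (Ici a))
    (hderiv : ∀ x ∈ Ioi a, HasDerivAt F (F' x) x)
    (hf : AEStronglyMeasurable f (volume.restrict (Ioi a)))
    (hf0 : ∀ x ∈ Ioi a, 0 ≤ f x) (hfF : ∀ x ∈ Ioi a, f x ≤ F' x) {b : ℝ} (hab : a ≤ b) :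
    ∫ x in a..b, f x ≤ F b - F a := by
  have hfi : IntervalIntegrable f volume a b :=
    (intervalIntegrable_iff_integrableOn_Ioc_of_le hab).2
      (integrableOn_Ioc_of_le_deriv hF hderiv hf hf0 hfF b)
  have hF'i : IntervalIntegrable F' volume a b :=
    (intervalIntegrable_iff_integrableOn_Ioc_of_le hab).2
      (intervalIntegral.integrableOn_deriv_of_nonneg (hF.mono Icc_subset_Ici_self)
        (fun x hx => hderiv x hx.1) fun x hx => (hf0 x hx.1).trans (hfF x hx.1))
  calc ∫ x in a..b, f x ≤ ∫ x in a..b, F' x :=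
        intervalIntegral.integral_mono_on_of_le_Ioo hab hfi hF'i fun x hx => hfF x hx.1
    _ = F b - F a := intervalIntegral.integral_eq_sub_of_hasDerivAt_of_le hab
        (hF.mono Icc_subset_Ici_self) (fun x hx => hderiv x hx.1) hF'i

theorem integrableOn_Ioi_of_le_deriv {C : ℝ} (hF : ContinuousOn F (Ici a))
    (hderiv : ∀ x ∈ Ioi a, HasDerivAt F (F' x) x)
    (hf : AEStronglyMeasurable f (volume.restrict (Ioi a)))
    (hf0 : ∀ x ∈ Ioi a, 0 ≤ f x) (hfF : ∀ x ∈ Ioi a, f x ≤ F' x)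
    (hC : ∀ x ∈ Ioi a, F x ≤ C) :
    IntegrableOn f (Ioi a) := by
  refine integrableOn_Ioi_of_intervalIntegral_norm_bounded (C - F a) a
    (integrableOn_Ioc_of_le_deriv hF hderiv hf hf0 hfF) tendsto_id ?_
  filter_upwards [eventually_gt_atTop a] with b hb
  -- `‖f‖` satisfies the same hypotheses as `f`
  have hnorm := intervalIntegral_le_sub_of_le_deriv hF hderiv hf.norm
    (fun x _ => norm_nonneg (f x))
    (fun x hx => (Real.norm_of_nonneg (hf0 x hx)).trans_le (hfF x hx)) hb.le
  linarith [hC b hb]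

theorem setIntegral_Ioi_le_of_le_deriv {C : ℝ} (hF : ContinuousOn F (Ici a))
    (hderiv : ∀ x ∈ Ioi a, HasDerivAt F (F' x) x)
    (hf : AEStronglyMeasurable f (volume.restrict (Ioi a)))
    (hf0 : ∀ x ∈ Ioi a, 0 ≤ f x) (hfF : ∀ x ∈ Ioi a, f x ≤ F' x)
    (hC : ∀ x ∈ Ioi a, F x ≤ C) :
    ∫ x in Ioi a, f x ≤ C - F a := by
  refine le_of_tendsto (intervalIntegral_tendsto_integral_Ioi a
    (integrableOn_Ioi_of_le_deriv hF hderiv hf hf0 hfF hC) tendsto_id) ?_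
  filter_upwards [eventually_gt_atTop a] with b hb
  rw [id]
  linarith [intervalIntegral_le_sub_of_le_deriv hF hderiv hf hf0 hfF hb.le, hC b hb]

end Comparison

theorem continuousOn_integral_Ici {w : ℝ → ℝ} {a : ℝ} (hw : IntegrableOn w (Ici a)) :
    ContinuousOn (fun r => ∫ t in Ici r, w t) (Ici a) := by
  have hv : Integrable ((Ici a).indicator w) := (integrable_indicator_iff measurableSet_Ici).2 hw
  refine ((continuousOn_const (c := ∫ t in Ici a, w t)).sub (intervalIntegral.continuous_primitive
    (fun _ _ => hv.intervalIntegrable) a).continuousOn).congr fun r (hr : a ≤ r) => ?_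
  have hsub : ∫ t in a..r, (Ici a).indicator w t = ∫ t in a..r, w t :=
    intervalIntegral.integral_congr fun t ht =>
      indicator_of_mem (by rw [uIcc_of_le hr] at ht; exact ht.1) w
  rw [Pi.sub_apply, hsub, ← intervalIntegral.integral_Ici_sub_Ici' hw
    (hw.mono_set (Ici_subset_Ici.2 hr)), sub_sub_cancel]

theorem HasDerivAt.pow_mul_of_ne_zero {g f : ℝ → ℝ} {g' f' r : ℝ} (n : ℕ)
    (hg : HasDerivAt g g' r) (hf : HasDerivAt f f' r) (hgr : g r ≠ 0) :
    HasDerivAt (fun x => g x ^ n * f x) (g r ^ n * (f' + n * (g' / g r) * f r)) r := by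
  refine ((hg.fun_pow n).fun_mul hf).congr_deriv ?_
  rcases n with _ | k
  · simp
  · field_simp
    push_cast
    ring

theorem monotoneOn_Ioi_of_hasDerivAt_nonneg {f f' : ℝ → ℝ} {a : ℝ}
    (hf : ∀ x ∈ Ioi a, HasDerivAt f (f' x) x) (hf' : ∀ x ∈ Ioi a, 0 ≤ f' x) :
    MonotoneOn f (Ioi a) :=
  monotoneOn_of_hasDerivWithinAt_nonneg (convex_Ioi a)
    (fun x hx => (hf x hx).continuousAt.continuousWithinAt)
    (by simpa using fun x hx => (hf x hx).hasDerivWithinAt) (by simpa using hf')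

theorem antitoneOn_Ioi_of_hasDerivAt_nonpos {f f' : ℝ → ℝ} {a : ℝ}
    (hf : ∀ x ∈ Ioi a, HasDerivAt f (f' x) x) (hf' : ∀ x ∈ Ioi a, f' x ≤ 0) :
    AntitoneOn f (Ioi a) :=
  antitoneOn_of_hasDerivWithinAt_nonpos (convex_Ioi a)
    (fun x hx => (hf x hx).continuousAt.continuousWithinAt)
    (by simpa using fun x hx => (hf x hx).hasDerivWithinAt) (by simpa using hf')

theorem tendsto_atTop_zero_of_antitoneOn {h : ℝ → ℝ} {a : ℝ} (hanti : AntitoneOn h (Ioi a))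
    (hpos : ∀ r ∈ Ioi a, 0 ≤ h r) (hsmall : ∀ ε > 0, ∃ r ∈ Ioi a, h r < ε) :
    Tendsto h atTop (𝓝 0) := by
  refine tendsto_order.2 ⟨fun b hb => ?_, fun ε hε => ?_⟩
  · filter_upwards [eventually_gt_atTop a] with r hr
    exact hb.trans_le (hpos r hr)
  · obtain ⟨r₀, hr₀, hlt⟩ := hsmall ε hε
    filter_upwards [eventually_ge_atTop r₀] with r hr
    exact (hanti hr₀ (Ici_subset_Ioi.2 hr₀ hr) hr).trans_lt hlt

section Flux

variable {w h h' : ℝ → ℝ} {a lam : ℝ}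

theorem mul_deriv_nonpos_of_not_integrableOn_inv (hw : ContinuousOn w (Ici a))
    (hwpos : ∀ r ∈ Ici a, 0 < w r) (hderiv : ∀ r ∈ Ioi a, HasDerivAt h (h' r) r)
    (hmono : MonotoneOn (fun r => w r * h' r) (Ioi a)) {C : ℝ} (hC : ∀ r ∈ Ioi a, h r ≤ C)
    (hint : ¬ IntegrableOn (fun r => (w r)⁻¹) (Ici a)) :
    ∀ r ∈ Ioi a, w r * h' r ≤ 0 := by
  by_contra! ⟨r₁, hr₁, hK⟩
  have hsub : Ioi r₁ ⊆ Ioi a := Ioi_subset_Ioi hr₁.out.le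
  have hwinv : ContinuousOn (fun r => (w r)⁻¹) (Ici a) := hw.inv₀ fun r hr => (hwpos r hr).ne'
  have hIcc : IntegrableOn (fun r => (w r)⁻¹) (Icc a r₁) :=
    (hwinv.mono Icc_subset_Ici_self).integrableOn_Icc
  have hIoi : IntegrableOn (fun r => (w r)⁻¹) (Ioi r₁) := by
    set K := w r₁ * h' r₁
    refine integrableOn_Ioi_of_le_deriv (F := fun r => h r / K) (F' := fun r => h' r / K)
      (C := C / K)
      (fun r hr =>
        ((hderiv r (Ici_subset_Ioi.2 hr₁ hr)).continuousAt.div_const K).continuousWithinAt)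
      (fun r hr => (hderiv r (hsub hr)).div_const K)
      ((hwinv.mono (hsub.trans Ioi_subset_Ici_self)).aestronglyMeasurable measurableSet_Ioi)
      (fun r hr => (inv_pos.2 (hwpos r (Ioi_subset_Ici_self (hsub hr)))).le) (fun r hr => ?_)
      (fun r hr => div_le_div_of_nonneg_right (hC r (hsub hr)) hK.le)
    have hKr : K ≤ w r * h' r := hmono hr₁ (hsub hr) hr.out.le
    rw [le_div_iff₀ hK, inv_mul_eq_div, div_le_iff₀ (hwpos r (Ioi_subset_Ici_self (hsub hr)))]
    linarith
  exact hint (Icc_union_Ioi_eq_Ici hr₁.out.le ▸ hIcc.union hIoi)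

theorem antitoneOn_of_mul_deriv_nonpos (hwpos : ∀ r ∈ Ioi a, 0 < w r)
    (hderiv : ∀ r ∈ Ioi a, HasDerivAt h (h' r) r) (hu : ∀ r ∈ Ioi a, w r * h' r ≤ 0) :
    AntitoneOn h (Ioi a) :=
  antitoneOn_Ioi_of_hasDerivAt_nonpos hderiv fun r hr =>
    nonpos_of_mul_nonpos_right (hu r hr) (hwpos r hr)

theorem mul_integral_Ioi_le_neg_mul_deriv (hwint : IntegrableOn w (Ici a))
    (hw0 : ∀ r ∈ Ioi a, 0 ≤ w r) (hlam : 0 ≤ lam) {ε : ℝ} (hε0 : 0 ≤ ε)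
    (hε : ∀ r ∈ Ioi a, ε ≤ h r)
    (hflux : ∀ r ∈ Ioi a, HasDerivAt (fun x => w x * h' x) (lam * (w r * h r)) r)
    (hu : ∀ r ∈ Ioi a, w r * h' r ≤ 0) {r : ℝ} (hr : r ∈ Ioi a) :
    lam * ε * ∫ t in Ioi r, w t ≤ -(w r * h' r) := by
  have hsub : Ioi r ⊆ Ioi a := Ioi_subset_Ioi hr.out.le
  have hle := setIntegral_Ioi_le_of_le_deriv (f := fun t => lam * ε * w t)
    (F := fun x => w x * h' x) (F' := fun x => lam * (w x * h x)) (C := 0)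
    (fun x hx => (hflux x (Ici_subset_Ioi.2 hr hx)).continuousAt.continuousWithinAt)
    (fun x hx => hflux x (hsub hx))
    ((hwint.mono_set (hsub.trans Ioi_subset_Ici_self)).aestronglyMeasurable.const_mul _)
    (fun x hx => mul_nonneg (mul_nonneg hlam hε0) (hw0 x (hsub hx)))
    (fun x hx => by
      rw [mul_assoc, mul_comm ε]
      exact mul_le_mul_of_nonneg_left
        (mul_le_mul_of_nonneg_left (hε x (hsub hx)) (hw0 x (hsub hx))) hlam)
    (fun x hx => hu x (hsub hx))
  rw [← integral_const_mul]
  simpa using hle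

theorem exists_lt_of_not_integrableOn_integral_Ici_div (hw : ContinuousOn w (Ici a))
    (hwpos : ∀ r ∈ Ici a, 0 < w r) (hwint : IntegrableOn w (Ici a))
    (hh : ContinuousOn h (Ici a)) (hhpos : ∀ r ∈ Ioi a, 0 ≤ h r)
    (hderiv : ∀ r ∈ Ioi a, HasDerivAt h (h' r) r) (hlam : 0 < lam)
    (hflux : ∀ r ∈ Ioi a, HasDerivAt (fun x => w x * h' x) (lam * (w r * h r)) r)
    (hu : ∀ r ∈ Ioi a, w r * h' r ≤ 0)
    (hratio : ¬ IntegrableOn (fun r => (∫ t in Ici r, w t) / w r) (Ici a))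
    {ε : ℝ} (hε : 0 < ε) : ∃ r ∈ Ioi a, h r < ε := by
  by_contra! hge
  have hlε : 0 < lam * ε := mul_pos hlam hε
  apply hratio
  rw [integrableOn_Ici_iff_integrableOn_Ioi]
  refine integrableOn_Ioi_of_le_deriv (F := fun r => -h r / (lam * ε))
    (F' := fun r => -h' r / (lam * ε)) (C := 0) (hh.neg.div_const _)
    (fun r hr => (hderiv r hr).neg.div_const _)
    ((((continuousOn_integral_Ici hwint).div hw fun r hr => (hwpos r hr).ne').mono
      Ioi_subset_Ici_self).aestronglyMeasurable measurableSet_Ioi)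
    (fun r hr => div_nonneg (setIntegral_nonneg measurableSet_Ici fun t ht =>
      (hwpos t (Ici_subset_Ici.2 hr.out.le ht)).le) (hwpos r (Ioi_subset_Ici_self hr)).le)
    (fun r hr => ?_)
    (fun r hr => div_nonpos_of_nonpos_of_nonneg (neg_nonpos.2 (hhpos r hr)) hlε.le)
  have hkey := mul_integral_Ioi_le_neg_mul_deriv hwint
    (fun t ht => (hwpos t (Ioi_subset_Ici_self ht)).le) hlam.le hε.le hge hflux hu hr
  rw [← integral_Ici_eq_integral_Ioi] at hkey
  rw [div_le_div_iff₀ (hwpos r (Ioi_subset_Ici_self hr)) hlε]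
  linarith

end Flux

theorem stmt_6_general (m : ℕ) (hm : 2 ≤ m) (R₀ lam : ℝ) (hlam : 0 < lam)
    (g h : ℝ → ℝ)
    (hg : ContDiffOn ℝ 1 g (Set.Ici R₀))
    (hgpos : ∀ r ∈ Set.Ici R₀, 0 < g r)
    (hgint : ¬ MeasureTheory.IntegrableOn (fun t => (g t ^ (m - 1))⁻¹) (Set.Ici R₀))
    (hgint' : MeasureTheory.IntegrableOn (fun t => g t ^ (m - 1)) (Set.Ici R₀))
    (hratio : ¬ MeasureTheory.IntegrableOn
      (fun r => (∫ t in Set.Ici r, g t ^ (m - 1)) / g r ^ (m - 1)) (Set.Ici R₀))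
    (hbdd : ∃ C : ℝ, ∀ r ∈ Set.Ici R₀, h r ≤ C)
    (hh : ContDiffOn ℝ 2 h (Set.Ici R₀))
    (hhpos : ∀ r ∈ Set.Ici R₀, 0 < h r)
    (hode : ∀ r ∈ Set.Ici R₀,
      deriv (deriv h) r + ((m : ℝ) - 1) * (deriv g r / g r) * deriv h r = lam * h r) :
    Filter.Tendsto h Filter.atTop (nhds 0) := by
  obtain ⟨C, hC⟩ := hbdd
  have hg' : ∀ r ∈ Ioi R₀, HasDerivAt g (deriv g r) r := fun r hr =>
    ((hg.contDiffAt (Ici_mem_nhds hr)).differentiableAt one_ne_zero).hasDerivAt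
  have hh' : ∀ r ∈ Ioi R₀, HasDerivAt h (deriv h r) r := fun r hr =>
    ((hh.contDiffAt (Ici_mem_nhds hr)).differentiableAt two_ne_zero).hasDerivAt
  have hh'' : ∀ r ∈ Ioi R₀, HasDerivAt (deriv h) (deriv (deriv h) r) r := fun r hr =>
    ((((hh.mono Ioi_subset_Ici_self).deriv_of_isOpen isOpen_Ioi le_rfl).contDiffAt
      (Ioi_mem_nhds hr)).differentiableAt one_ne_zero).hasDerivAt
  have hflux : ∀ r ∈ Ioi R₀, HasDerivAt (fun x => g x ^ (m - 1) * deriv h x)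
      (lam * (g r ^ (m - 1) * h r)) r := fun r hr =>
    ((hg' r hr).pow_mul_of_ne_zero (m - 1) (hh'' r hr) (hgpos r hr.out.le).ne').congr_deriv <| by
      rw [Nat.cast_sub (by omega : 1 ≤ m), Nat.cast_one, hode r hr.out.le, mul_left_comm]
  have hw : ContinuousOn (fun t => g t ^ (m - 1)) (Ici R₀) := hg.continuousOn.pow _
  have hwpos : ∀ r ∈ Ici R₀, 0 < g r ^ (m - 1) := fun r hr => pow_pos (hgpos r hr) _
  have hh0 : ∀ r ∈ Ioi R₀, 0 ≤ h r := fun r hr => (hhpos r hr.out.le).le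
  have hu := mul_deriv_nonpos_of_not_integrableOn_inv hw hwpos hh'
    (monotoneOn_Ioi_of_hasDerivAt_nonneg hflux fun r hr =>
      mul_nonneg hlam.le (mul_nonneg (hwpos r hr.out.le).le (hh0 r hr)))
    (fun r hr => hC r hr.out.le) hgint
  exact tendsto_atTop_zero_of_antitoneOn
    (antitoneOn_of_mul_deriv_nonpos (fun r hr => hwpos r hr.out.le) hh' hu) hh0
    fun ε hε => exists_lt_of_not_integrableOn_integral_Ici_div hw hwpos hgint' hh.continuousOn
      hh0 hh' hlam hflux hu hratio hε

/-- if `1/g^{m-1}` is not integrable at infinity, `g^{m-1}` is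
integrable, and `r ↦ (∫_r^∞ g^{m-1})/g(r)^{m-1}` is not integrable at infinity,
then every bounded positive solution of `h'' + (m-1)(g'/g)h' = λ h` tends to `0`. -/
theorem stmt_6 (m : ℕ) (hm : 2 ≤ m) (R₀ lam : ℝ) (hR₀ : 0 < R₀) (hlam : 0 < lam)
    (g h : ℝ → ℝ)
    (hg : ContDiffOn ℝ 1 g (Set.Ici R₀))
    (hgpos : ∀ r ∈ Set.Ici R₀, 0 < g r)
    (hgint : ¬ MeasureTheory.IntegrableOn (fun t => (g t ^ (m - 1))⁻¹) (Set.Ici R₀))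
    (hgint' : MeasureTheory.IntegrableOn (fun t => g t ^ (m - 1)) (Set.Ici R₀))
    (hratio : ¬ MeasureTheory.IntegrableOn
      (fun r => (∫ t in Set.Ici r, g t ^ (m - 1)) / g r ^ (m - 1)) (Set.Ici R₀))
    (hbdd : ∃ C : ℝ, ∀ r ∈ Set.Ici R₀, h r ≤ C)
    (hh : ContDiffOn ℝ 2 h (Set.Ici R₀))
    (hhpos : ∀ r ∈ Set.Ici R₀, 0 < h r)
    (hode : ∀ r ∈ Set.Ici R₀,
      deriv (deriv h) r + ((m : ℝ) - 1) * (deriv g r / g r) * deriv h r = lam * h r) :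
    Filter.Tendsto h Filter.atTop (nhds 0) :=
  stmt_6_general m hm R₀ lam hlam g h hg hgpos hgint hgint' hratio hbdd hh hhpos hode
end

section
/- Let m ≥ 2 be an integer, R₀ > 0 and λ > 0 real numbers, and g : [R₀, ∞) → ℝ a continuously differentiable function with g(r) > 0 for all r ≥ R₀. Let (R_n) be a strictly increasing sequence of reals with R_1 > R₀ and R_n → +∞, and for each n let h_n : [R₀, R_n] → ℝ be twice continuously differentiable with h_n(r) ≥ 0 on [R₀, R_n], h_n(R₀) = 1, h_n(R_n) = 0, and h_n''(r) + (m-1)·(g'(r)/g(r))·h_n'(r) = λ·h_n(r) on [R₀, R_n]. Suppose h : [R₀, ∞) → ℝ is twice continuously differentiable, satisfies h(r) > 0 for all r ≥ R₀, h(R₀) = 1, h''(r) + (m-1)·(g'(r)/g(r))·h'(r) = λ·h(r) on [R₀, ∞), and h(r) = lim_{n→∞} h_n(r) for every r ≥ R₀. Then h(r) → 0 as r → +∞ if and only if at least one of the following holds: (1) ∫_{R₀}^∞ g(t)^{1-m} dt < +∞; (2) g^{m-1} is not Lebesgue integrable on [R₀, ∞); (3) ∫_{R₀}^∞ (∫_r^∞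 g(t)^{m-1} dt) / g(r)^{m-1} dr = +∞. -/
/-!
With `v = g ^ (m - 1)` the radial equation reads `(v h')' = λ v h`. The Dirichlet solutions are
nonincreasing, hence so is their limit `h`, and the flux `v h'` is nonpositive and nondecreasing.
This forces `∫ v h < ∞`, so `h` can have a positive limit `L` only if `v` is integrable. In that
case the flux tends to `0` (otherwise `1 / v` would be integrable along with `v`, which is
impossible), so `-v h' (x) = λ ∫_x^∞ v h`. Bounding `h` on `[x, ∞)` below by `L` and above by
`h x` gives `λ L F ≤ -h' ≤ λ h F` with `F x = (∫_x^∞ v) / v x`, so `h` stays away from `0` exactly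
when `F` is integrable.
-/

open Set MeasureTheory Filter Topology

theorem IsOpen.monotoneOn_of_hasDerivAt_nonneg {f f' : ℝ → ℝ} {s : Set ℝ} (hs : IsOpen s)
    (hconv : Convex ℝ s) (hf : ∀ x ∈ s, HasDerivAt f (f' x) x) (hf' : ∀ x ∈ s, 0 ≤ f' x) :
    MonotoneOn f s :=
  monotoneOn_of_hasDerivWithinAt_nonneg hconv
    (fun x hx => (hf x hx).continuousAt.continuousWithinAt)
    (by rw [hs.interior_eq]; exact fun x hx => (hf x hx).hasDerivWithinAt)
    (by rwa [hs.interior_eq])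

/-- Once `f'` is positive at some point, monotonicity of `v f'` keeps it positive up to `b`,
contradicting the minimality of `f b`. -/
theorem antitoneOn_of_monotoneOn_mul_deriv {f f' v : ℝ → ℝ} {a b : ℝ}
    (hf : ContinuousOn f (Icc a b)) (hd : ∀ x ∈ Ioo a b, HasDerivAt f (f' x) x)
    (hv : ∀ x ∈ Ioo a b, 0 < v x) (hw : MonotoneOn (fun x => v x * f' x) (Ioo a b))
    (hmin : IsMinOn f (Icc a b) b) : AntitoneOn f (Icc a b) := by
  refine antitoneOn_of_hasDerivWithinAt_nonpos (convex_Icc a b) hf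
    (by rw [interior_Icc]; exact fun x hx => (hd x hx).hasDerivWithinAt) ?_
  rw [interior_Icc]
  intro x hx
  by_contra! hpos
  have hinc : StrictMonoOn f (Icc x b) := by
    refine strictMonoOn_of_hasDerivWithinAt_pos (convex_Icc x b)
      (hf.mono (Icc_subset_Icc_left hx.1.le)) (f' := f') ?_ ?_ <;> rw [interior_Icc]
    · exact fun y hy => (hd y ⟨hx.1.trans hy.1, hy.2⟩).hasDerivWithinAt
    · intro y hy
      have hy' : y ∈ Ioo a b := ⟨hx.1.trans hy.1, hy.2⟩
      have hxy : v x * f' x ≤ v y * f' y := hw hx hy' hy.1.le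
      exact pos_of_mul_pos_right ((mul_pos (hv x hx) hpos).trans_le hxy) (hv y hy').le
  exact (hinc (left_mem_Icc.2 hx.2.le) (right_mem_Icc.2 hx.2.le) hx.2).not_ge
    (isMinOn_iff.1 hmin x ⟨hx.1.le, hx.2.le⟩)

theorem antitoneOn_Ici_of_tendsto {ι : Type*} {l : Filter ι} [l.NeBot] {f : ι → ℝ → ℝ}
    {h : ℝ → ℝ} {a : ℝ} {R : ι → ℝ} (hR : Tendsto R l atTop)
    (hf : ∀ i, AntitoneOn (f i) (Icc a (R i)))
    (hlim : ∀ x ∈ Ici a, Tendsto (fun i => f i x) l (𝓝 (h x))) : AntitoneOn h (Ici a) := by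
  intro x hx y hy hxy
  refine le_of_tendsto_of_tendsto (hlim y hy) (hlim x hx) ?_
  filter_upwards [hR.eventually_ge_atTop y] with i hi
  exact hf i ⟨hx, hxy.trans hi⟩ ⟨hy, hi⟩ hxy

theorem integrableOn_Ici_of_intervalIntegral_le {f : ℝ → ℝ} {a b C : ℝ} (hab : a ≤ b)
    (hf : ContinuousOn f (Ici a)) (hnn : ∀ x ∈ Ici b, 0 ≤ f x)
    (hC : ∀ x, b ≤ x → ∫ t in b..x, f t ≤ C) : IntegrableOn f (Ici a) := by
  have hloc : ∀ x, IntegrableOn f (Icc a x) := fun x =>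
    (hf.mono Icc_subset_Ici_self).integrableOn_Icc
  rw [← Icc_union_Ioi_eq_Ici hab]
  refine (hloc b).union (integrableOn_Ioi_of_intervalIntegral_norm_bounded C b
    (fun x => (hloc x).mono_set (Ioc_subset_Icc_self.trans (Icc_subset_Icc_left hab)))
    tendsto_id ?_)
  filter_upwards [eventually_ge_atTop b] with x hx
  have hnorm : ∀ t ∈ uIcc b x, ‖f t‖ = f t := fun t ht =>
    Real.norm_of_nonneg (hnn t (by rw [uIcc_of_le hx] at ht; exact ht.1))
  rw [intervalIntegral.integral_congr hnorm]
  exact hC x hx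

theorem not_integrableOn_inv_of_integrableOn {v : ℝ → ℝ} {a : ℝ} (hpos : ∀ x ∈ Ici a, 0 < v x)
    (hv : IntegrableOn v (Ici a)) : ¬ IntegrableOn (fun t => (v t)⁻¹) (Ici a) := by
  intro hinv
  have htwo : IntegrableOn (fun _ => (2 : ℝ)) (Ici a) := by
    refine (hv.add hinv).mono' aestronglyMeasurable_const
      (ae_restrict_of_forall_mem measurableSet_Ici fun t ht => ?_)
    have hvt := hpos t ht
    have hsq : v t + (v t)⁻¹ - 2 = (v t - 1) ^ 2 / v t := by field_simp; ring
    rw [Real.norm_two, Pi.add_apply, ← sub_nonneg, hsq]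
    positivity
  simp [integrableOn_const_iff] at htwo

theorem continuousOn_setIntegral_Ioi {f : ℝ → ℝ} {a : ℝ} (hf : IntegrableOn f (Ici a)) :
    ContinuousOn (fun x => ∫ t in Ioi x, f t) (Ici a) := by
  have hsplit : ∀ x ∈ Ici a,
      ∫ t in Ioi x, f t = (∫ t in Ioi a, f t) - ∫ t in Ioc a x, f t := by
    intro x hx
    rw [eq_sub_iff_add_eq', ← setIntegral_union (Ioc_disjoint_Ioi le_rfl) measurableSet_Ioi
      (hf.mono_set (Ioc_subset_Icc_self.trans Icc_subset_Ici_self))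
      (hf.mono_set fun t ht => (hx.trans ht.le : a ≤ t)), Ioc_union_Ioi_eq_Ioi hx]
  refine continuousOn_of_locally_continuousOn fun x hx =>
    ⟨Iio (x + 1), isOpen_Iio, lt_add_one x, ?_⟩
  have hprim := intervalIntegral.continuousOn_primitive
    (hf.mono_set (Icc_subset_Ici_self : Icc a (x + 1) ⊆ Ici a))
  refine (((continuousOn_const (c := ∫ t in Ioi a, f t)).sub hprim).mono ?_).congr ?_
  · exact fun t ht => ⟨ht.1, ht.2.le⟩
  · exact fun t ht => hsplit t ht.1

structure PosAntitoneSolution (a lam : ℝ) (v h h' : ℝ → ℝ) : Prop where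
  lam_pos : 0 < lam
  continuousOn_weight : ContinuousOn v (Ici a)
  weight_pos : ∀ x ∈ Ici a, 0 < v x
  continuousOn : ContinuousOn h (Ici a)
  pos : ∀ x ∈ Ici a, 0 < h x
  antitoneOn : AntitoneOn h (Ici a)
  hasDerivAt : ∀ x ∈ Ioi a, HasDerivAt h (h' x) x
  hasDerivAt_flux : ∀ x ∈ Ioi a, HasDerivAt (fun y => v y * h' y) (lam * (v x * h x)) x

namespace PosAntitoneSolution

variable {a lam : ℝ} {v h h' : ℝ → ℝ}

theorem deriv_nonpos (hs : PosAntitoneSolution a lam v h h') {x : ℝ} (hx : a < x) :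
    h' x ≤ 0 := by
  have hacc : AccPt x (𝓟 (Ioi a)) := by
    simpa using (PerfectSpace.univ_preperfect x (mem_univ x)).nhds_inter (Ioi_mem_nhds hx)
  exact (hs.hasDerivAt x hx).hasDerivWithinAt.nonpos_of_antitoneOn hacc
    (hs.antitoneOn.mono Ioi_subset_Ici_self)

theorem flux_nonpos (hs : PosAntitoneSolution a lam v h h') {x : ℝ} (hx : a < x) :
    v x * h' x ≤ 0 :=
  mul_nonpos_of_nonneg_of_nonpos (hs.weight_pos x hx.le).le (hs.deriv_nonpos hx)

theorem mul_pos (hs : PosAntitoneSolution a lam v h h') {x : ℝ} (hx : x ∈ Ici a) :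
    0 < v x * h x :=
  _root_.mul_pos (hs.weight_pos x hx) (hs.pos x hx)

theorem monotoneOn_flux (hs : PosAntitoneSolution a lam v h h') :
    MonotoneOn (fun y => v y * h' y) (Ioi a) :=
  isOpen_Ioi.monotoneOn_of_hasDerivAt_nonneg (convex_Ioi a) hs.hasDerivAt_flux
    fun _ hx => (_root_.mul_pos hs.lam_pos (hs.mul_pos (Ioi_subset_Ici_self hx))).le

theorem flux_sub_flux (hs : PosAntitoneSolution a lam v h h') {x y : ℝ} (hx : a < x)
    (hxy : x ≤ y) : v y * h' y - v x * h' x = lam * ∫ t in x..y, v t * h t := by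
  have hftc : ∫ t in x..y, lam * (v t * h t) = v y * h' y - v x * h' x := by
    refine intervalIntegral.integral_eq_sub_of_hasDerivAt (f := fun y => v y * h' y) ?_ ?_
    · intro t ht
      rw [uIcc_of_le hxy] at ht
      exact hs.hasDerivAt_flux t (hx.trans_le ht.1)
    · refine ContinuousOn.intervalIntegrable (continuousOn_const.mul ?_)
      refine (hs.continuousOn_weight.mul hs.continuousOn).mono ?_
      rw [uIcc_of_le hxy]
      exact fun t ht => hx.le.trans ht.1
  rw [← hftc, intervalIntegral.integral_const_mul]

/-- Since the flux is nonpositive, `λ ∫_b^x v h = (v h') x - (v h') b ≤ -(v h') b`. -/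
theorem integrableOn_mul (hs : PosAntitoneSolution a lam v h h') :
    IntegrableOn (fun t => v t * h t) (Ici a) := by
  have hb : a < a + 1 := lt_add_one a
  refine integrableOn_Ici_of_intervalIntegral_le (C := -(v (a + 1) * h' (a + 1)) / lam) hb.le
    (hs.continuousOn_weight.mul hs.continuousOn)
    (fun x hx => (hs.mul_pos (hb.le.trans hx)).le) fun x hx => ?_
  rw [le_div_iff₀ hs.lam_pos]
  linarith [hs.flux_sub_flux hb hx, hs.flux_nonpos (hb.trans_le hx)]

theorem integrableOn_weight_of_le (hs : PosAntitoneSolution a lam v h h') {c : ℝ} (hc : 0 < c)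
    (hch : ∀ x ∈ Ici a, c ≤ h x) : IntegrableOn v (Ici a) := by
  refine (hs.integrableOn_mul.div_const c).mono'
    (hs.continuousOn_weight.aestronglyMeasurable measurableSet_Ici)
    (ae_restrict_of_forall_mem measurableSet_Ici fun x hx => ?_)
  rw [Real.norm_of_nonneg (hs.weight_pos x hx).le, le_div_iff₀ hc]
  exact mul_le_mul_of_nonneg_left (hch x hx) (hs.weight_pos x hx).le

theorem tendsto_flux (hs : PosAntitoneSolution a lam v h h') {x : ℝ} (hx : a < x) :
    Tendsto (fun y => v y * h' y) atTop
      (𝓝 (v x * h' x + lam * ∫ t in Ioi x, v t * h t)) := by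
  have hint : IntegrableOn (fun t => v t * h t) (Ioi x) :=
    hs.integrableOn_mul.mono_set fun t ht => (hx.trans ht).le
  refine (((intervalIntegral_tendsto_integral_Ioi x hint tendsto_id).const_mul lam).const_add
    (v x * h' x)).congr' ?_
  filter_upwards [eventually_ge_atTop x] with y hy
  rw [id, ← hs.flux_sub_flux hx hy]
  ring

/-- The flux increases to `B`, so `-B / v ≤ -h'`, whose integral over `[a, x]` is at most `h a`. -/
theorem integrableOn_inv_weight (hs : PosAntitoneSolution a lam v h h') {B : ℝ}
    (hB : Tendsto (fun y => v y * h' y) atTop (𝓝 B)) (hBneg : B < 0) :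
    IntegrableOn (fun t => (v t)⁻¹) (Ici a) := by
  have hinv : ContinuousOn (fun t => (v t)⁻¹) (Ici a) :=
    hs.continuousOn_weight.inv₀ fun x hx => (hs.weight_pos x hx).ne'
  refine integrableOn_Ici_of_intervalIntegral_le (C := h a / -B) le_rfl hinv
    (fun x hx => (inv_pos.2 (hs.weight_pos x hx)).le) fun x hx => ?_
  have hle := intervalIntegral.integral_le_sub_of_hasDeriv_right_of_le hx
    (hs.continuousOn.neg.mono Icc_subset_Ici_self)
    (fun t ht => (hs.hasDerivAt t ht.1).neg.hasDerivWithinAt)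
    ((hinv.mono Icc_subset_Ici_self).integrableOn_Icc.const_mul (-B)) fun t ht => ?_
  · rw [intervalIntegral.integral_const_mul, Pi.neg_apply, Pi.neg_apply] at hle
    rw [le_div_iff₀ (neg_pos.2 hBneg)]
    linarith [hs.pos x hx]
  · have hvt := hs.weight_pos t ht.1.le
    have hwB : v t * h' t ≤ B := ge_of_tendsto hB <| by
      filter_upwards [eventually_ge_atTop t] with y hy
      exact hs.monotoneOn_flux ht.1 (ht.1.trans_le hy) hy
    rw [neg_mul, neg_le_neg_iff, ← div_eq_mul_inv, le_div_iff₀ hvt, mul_comm]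
    exact hwB

/-- When `v` is integrable the flux must vanish at infinity, since otherwise `v⁻¹` would be
integrable as well. -/
theorem neg_flux_eq (hs : PosAntitoneSolution a lam v h h') (hv : IntegrableOn v (Ici a))
    {x : ℝ} (hx : a < x) : -(v x * h' x) = lam * ∫ t in Ioi x, v t * h t := by
  have hB := hs.tendsto_flux hx
  have hBle : v x * h' x + lam * ∫ t in Ioi x, v t * h t ≤ 0 := le_of_tendsto hB <| by
    filter_upwards [eventually_gt_atTop a] with y hy
    exact hs.flux_nonpos hy
  have hBnonneg : ¬ v x * h' x + lam * ∫ t in Ioi x, v t * h t < 0 := fun hneg =>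
    not_integrableOn_inv_of_integrableOn hs.weight_pos hv (hs.integrableOn_inv_weight hB hneg)
  linarith

theorem integral_mul_le (hs : PosAntitoneSolution a lam v h h') (hv : IntegrableOn v (Ici a))
    {x : ℝ} (hx : a ≤ x) : ∫ t in Ioi x, v t * h t ≤ h x * ∫ t in Ioi x, v t := by
  have hsub : Ioi x ⊆ Ici a := fun t ht => hx.trans ht.le
  rw [← integral_const_mul]
  refine setIntegral_mono_on (hs.integrableOn_mul.mono_set hsub)
    ((hv.mono_set hsub).const_mul _) measurableSet_Ioi fun t ht => ?_
  rw [mul_comm (h x)]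
  exact mul_le_mul_of_nonneg_left (hs.antitoneOn hx (hsub ht) ht.le)
    (hs.weight_pos t (hsub ht)).le

theorem le_integral_mul (hs : PosAntitoneSolution a lam v h h') (hv : IntegrableOn v (Ici a))
    {c : ℝ} (hch : ∀ x ∈ Ici a, c ≤ h x) {x : ℝ} (hx : a ≤ x) :
    c * ∫ t in Ioi x, v t ≤ ∫ t in Ioi x, v t * h t := by
  have hsub : Ioi x ⊆ Ici a := fun t ht => hx.trans ht.le
  rw [← integral_const_mul]
  refine setIntegral_mono_on ((hv.mono_set hsub).const_mul _)
    (hs.integrableOn_mul.mono_set hsub) measurableSet_Ioi fun t ht => ?_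
  rw [mul_comm c]
  exact mul_le_mul_of_nonneg_left (hch t (hsub ht)) (hs.weight_pos t (hsub ht)).le

theorem neg_deriv_le (hs : PosAntitoneSolution a lam v h h') (hv : IntegrableOn v (Ici a))
    {x : ℝ} (hx : a < x) : -h' x ≤ lam * h x * ((∫ t in Ioi x, v t) / v x) := by
  rw [mul_div_assoc', le_div_iff₀ (hs.weight_pos x hx.le)]
  calc -h' x * v x = lam * ∫ t in Ioi x, v t * h t := by rw [← hs.neg_flux_eq hv hx]; ring
    _ ≤ lam * (h x * ∫ t in Ioi x, v t) :=
      mul_le_mul_of_nonneg_left (hs.integral_mul_le hv hx.le) hs.lam_pos.le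
    _ = lam * h x * ∫ t in Ioi x, v t := by ring

theorem le_neg_deriv (hs : PosAntitoneSolution a lam v h h') (hv : IntegrableOn v (Ici a))
    {c : ℝ} (hch : ∀ x ∈ Ici a, c ≤ h x) {x : ℝ} (hx : a < x) :
    lam * c * ((∫ t in Ioi x, v t) / v x) ≤ -h' x := by
  rw [mul_div_assoc', div_le_iff₀ (hs.weight_pos x hx.le)]
  calc lam * c * ∫ t in Ioi x, v t = lam * (c * ∫ t in Ioi x, v t) := by ring
    _ ≤ lam * ∫ t in Ioi x, v t * h t :=
      mul_le_mul_of_nonneg_left (hs.le_integral_mul hv hch hx.le) hs.lam_pos.le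
    _ = -h' x * v x := by rw [← hs.neg_flux_eq hv hx]; ring

theorem tail_div_nonneg (hs : PosAntitoneSolution a lam v h h') {x : ℝ} (hx : a ≤ x) :
    0 ≤ (∫ t in Ioi x, v t) / v x :=
  div_nonneg (setIntegral_nonneg measurableSet_Ioi fun t ht =>
    (hs.weight_pos t (hx.trans ht.le)).le) (hs.weight_pos x hx).le

theorem continuousOn_tail_div (hs : PosAntitoneSolution a lam v h h')
    (hv : IntegrableOn v (Ici a)) :
    ContinuousOn (fun x => (∫ t in Ioi x, v t) / v x) (Ici a) :=
  (continuousOn_setIntegral_Ioi hv).div hs.continuousOn_weight fun x hx =>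
    (hs.weight_pos x hx).ne'

theorem integrableOn_tail_div_of_le (hs : PosAntitoneSolution a lam v h h')
    (hv : IntegrableOn v (Ici a)) {c : ℝ} (hc : 0 < c) (hch : ∀ x ∈ Ici a, c ≤ h x) :
    IntegrableOn (fun x => (∫ t in Ioi x, v t) / v x) (Ici a) := by
  refine integrableOn_Ici_of_intervalIntegral_le (C := h a / (lam * c)) le_rfl
    (hs.continuousOn_tail_div hv) (fun x hx => hs.tail_div_nonneg hx) fun x hx => ?_
  have hle := intervalIntegral.integral_le_sub_of_hasDeriv_right_of_le hx
    (hs.continuousOn.neg.mono Icc_subset_Ici_self)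
    (fun t ht => (hs.hasDerivAt t ht.1).neg.hasDerivWithinAt)
    (((hs.continuousOn_tail_div hv).mono Icc_subset_Ici_self).integrableOn_Icc.const_mul
      (lam * c)) fun t ht => hs.le_neg_deriv hv hch ht.1
  rw [intervalIntegral.integral_const_mul, Pi.neg_apply, Pi.neg_apply] at hle
  rw [le_div_iff₀ (_root_.mul_pos hs.lam_pos hc)]
  linarith [hs.pos x hx]

theorem sub_le_mul_integral (hs : PosAntitoneSolution a lam v h h')
    (hv : IntegrableOn v (Ici a))
    (hF : IntegrableOn (fun x => (∫ t in Ioi x, v t) / v x) (Ici a)) {b x : ℝ} (hb : a < b)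
    (hx : b ≤ x) : h b - h x ≤ lam * h b * ∫ t in Ioi b, (∫ s in Ioi t, v s) / v t := by
  have hsub : Ioi b ⊆ Ici a := fun t ht => (hb.trans ht).le
  have hle := intervalIntegral.sub_le_integral_of_hasDeriv_right_of_le hx
    (hs.continuousOn.neg.mono fun t ht => hb.le.trans ht.1)
    (fun t ht => (hs.hasDerivAt t (hb.trans ht.1)).neg.hasDerivWithinAt)
    ((hF.mono_set fun t ht => hb.le.trans ht.1).const_mul (lam * h b)) fun t ht =>
      (hs.neg_deriv_le hv (hb.trans ht.1)).trans <| by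
        gcongr
        · exact hs.tail_div_nonneg (hb.trans ht.1).le
        · exact hs.lam_pos.le
        · exact hs.antitoneOn hb.le (hb.trans ht.1).le ht.1.le
  rw [intervalIntegral.integral_const_mul, Pi.neg_apply, Pi.neg_apply,
    intervalIntegral.integral_of_le hx] at hle
  have htail : ∫ t in Ioc b x, (∫ s in Ioi t, v s) / v t ≤
      ∫ t in Ioi b, (∫ s in Ioi t, v s) / v t :=
    setIntegral_mono_set (hF.mono_set hsub)
      (ae_restrict_of_forall_mem measurableSet_Ioi fun t ht => hs.tail_div_nonneg (hsub ht))
      Ioc_subset_Ioi_self.eventuallyLE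
  have hlamh : 0 ≤ lam * h b := (_root_.mul_pos hs.lam_pos (hs.pos b hb.le)).le
  nlinarith [mul_le_mul_of_nonneg_left htail hlamh]

theorem not_tendsto_zero (hs : PosAntitoneSolution a lam v h h') (hv : IntegrableOn v (Ici a))
    (hF : IntegrableOn (fun x => (∫ t in Ioi x, v t) / v x) (Ici a)) :
    ¬ Tendsto h atTop (𝓝 0) := by
  intro h0
  have htail : Tendsto (fun b => ∫ t in Ioi b, (∫ s in Ioi t, v s) / v t) atTop (𝓝 0) := by
    have hlim := tendsto_setIntegral_of_antitone (μ := volume) (fun b => measurableSet_Ioi)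
      (fun b c hbc => Ioi_subset_Ioi hbc) ⟨a, hF.mono_set Ioi_subset_Ici_self⟩
    have hempty : ⋂ b : ℝ, Ioi b = ∅ := iInter_eq_empty_iff.2 fun t => ⟨t, lt_irrefl t⟩
    rwa [hempty, Measure.restrict_empty, integral_zero_measure] at hlim
  obtain ⟨b, hsmall, hb⟩ := ((htail.const_mul lam).eventually_lt_const
    (by rw [mul_zero]; exact zero_lt_one)).and (eventually_gt_atTop a) |>.exists
  have hlow : ∀ x, b ≤ x → h b * (1 - lam * ∫ t in Ioi b, (∫ s in Ioi t, v s) / v t) ≤ h x :=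
    fun x hx => by linarith [hs.sub_le_mul_integral hv hF hb hx]
  have hpos : 0 < h b * (1 - lam * ∫ t in Ioi b, (∫ s in Ioi t, v s) / v t) :=
    _root_.mul_pos (hs.pos b hb.le) (sub_pos.2 hsmall)
  exact hpos.not_ge (ge_of_tendsto h0 (eventually_ge_atTop b |>.mono hlow))

theorem exists_pos_le_of_not_tendsto_zero (hs : PosAntitoneSolution a lam v h h')
    (h0 : ¬ Tendsto h atTop (𝓝 0)) : ∃ c > 0, ∀ x ∈ Ici a, c ≤ h x := by
  contrapose! h0
  refine tendsto_order.2 ⟨fun c hc => ?_, fun c hc => ?_⟩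
  · filter_upwards [eventually_ge_atTop a] with x hx
    exact hc.trans (hs.pos x hx)
  · obtain ⟨x, hx, hxc⟩ := h0 c hc
    filter_upwards [eventually_ge_atTop x] with y hy
    exact (hs.antitoneOn hx (hx.trans hy) hy).trans_lt hxc

theorem tendsto_zero_iff (hs : PosAntitoneSolution a lam v h h') :
    Tendsto h atTop (𝓝 0) ↔
      IntegrableOn (fun t => (v t)⁻¹) (Ici a) ∨ ¬ IntegrableOn v (Ici a) ∨
        ¬ IntegrableOn (fun x => (∫ t in Ioi x, v t) / v x) (Ici a) := by
  constructor
  · intro h0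
    by_contra! hcon
    exact hs.not_tendsto_zero hcon.2.1 hcon.2.2 h0
  · intro hcond
    by_contra h0
    obtain ⟨c, hc, hch⟩ := hs.exists_pos_le_of_not_tendsto_zero h0
    have hv := hs.integrableOn_weight_of_le hc hch
    rcases hcond with hinv | hnv | hnF
    · exact not_integrableOn_inv_of_integrableOn hs.weight_pos hv hinv
    · exact hnv hv
    · exact hnF (hs.integrableOn_tail_div_of_le hv hc hch)

end PosAntitoneSolution

theorem HasDerivAt.pow_mul_of_ne_zero_s9 {g u : ℝ → ℝ} {g' u' x : ℝ} (k : ℕ)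
    (hg : HasDerivAt g g' x) (hu : HasDerivAt u u' x) (hgx : g x ≠ 0) :
    HasDerivAt (fun y => g y ^ k * u y) (g x ^ k * (u' + k * (g' / g x) * u x)) x := by
  refine ((hg.fun_pow k).mul hu).congr_deriv ?_
  rcases k with _ | k
  · simp
  · field_simp
    push_cast
    ring

theorem hasDerivAt_pow_mul_deriv_of_ode_s9 {g f : ℝ → ℝ} {s : Set ℝ} {k : ℕ} {lam x : ℝ}
    (hg : ContDiffOn ℝ 1 g s) (hf : ContDiffOn ℝ 2 f s) (hx : s ∈ 𝓝 x) (hgx : g x ≠ 0)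
    (hode : deriv (deriv f) x + k * (deriv g x / g x) * deriv f x = lam * f x) :
    HasDerivAt (fun y => g y ^ k * deriv f y) (lam * (g x ^ k * f x)) x := by
  obtain ⟨u, hus, hu, hxu⟩ := mem_nhds_iff.1 hx
  have hf' : ContDiffOn ℝ 1 (deriv f) u := (hf.mono hus).deriv_of_isOpen hu le_rfl
  have hgd := ((hg.contDiffAt hx).differentiableAt one_ne_zero).hasDerivAt
  have hfd := ((hf'.contDiffAt (hu.mem_nhds hxu)).differentiableAt one_ne_zero).hasDerivAt
  exact (hgd.pow_mul_of_ne_zero_s9 k hfd hgx).congr_deriv (by rw [hode, mul_left_comm])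

theorem antitoneOn_Icc_of_ode {g f : ℝ → ℝ} {k : ℕ} {a b lam : ℝ} (hlam : 0 ≤ lam)
    (hg : ContDiffOn ℝ 1 g (Icc a b)) (hgpos : ∀ x ∈ Icc a b, 0 < g x)
    (hf : ContDiffOn ℝ 2 f (Icc a b)) (hfnn : ∀ x ∈ Icc a b, 0 ≤ f x) (hfb : f b = 0)
    (hode : ∀ x ∈ Icc a b,
      deriv (deriv f) x + k * (deriv g x / g x) * deriv f x = lam * f x) :
    AntitoneOn f (Icc a b) := by
  have hnhds : ∀ x ∈ Ioo a b, Icc a b ∈ 𝓝 x := fun x hx => Icc_mem_nhds hx.1 hx.2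
  refine antitoneOn_of_monotoneOn_mul_deriv (v := fun x => g x ^ k) hf.continuousOn
    (fun x hx => ((hf.contDiffAt (hnhds x hx)).differentiableAt two_ne_zero).hasDerivAt)
    (fun x hx => pow_pos (hgpos x (Ioo_subset_Icc_self hx)) k) ?_
    (isMinOn_iff.2 fun x hx => hfb ▸ hfnn x hx)
  refine isOpen_Ioo.monotoneOn_of_hasDerivAt_nonneg (convex_Ioo a b)
    (fun x hx => hasDerivAt_pow_mul_deriv_of_ode_s9 hg hf (hnhds x hx)
      (hgpos x (Ioo_subset_Icc_self hx)).ne' (hode x (Ioo_subset_Icc_self hx))) fun x hx => ?_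
  have := hgpos x (Ioo_subset_Icc_self hx)
  have := hfnn x (Ioo_subset_Icc_self hx)
  positivity

theorem PosAntitoneSolution.of_ode {g h : ℝ → ℝ} {k : ℕ} {a lam : ℝ} (hlam : 0 < lam)
    (hg : ContDiffOn ℝ 1 g (Ici a)) (hgpos : ∀ x ∈ Ici a, 0 < g x)
    (hh : ContDiffOn ℝ 2 h (Ici a)) (hpos : ∀ x ∈ Ici a, 0 < h x)
    (hanti : AntitoneOn h (Ici a))
    (hode : ∀ x ∈ Ici a,
      deriv (deriv h) x + k * (deriv g x / g x) * deriv h x = lam * h x) :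
    PosAntitoneSolution a lam (fun x => g x ^ k) h (deriv h) where
  lam_pos := hlam
  continuousOn_weight := hg.continuousOn.pow k
  weight_pos x hx := pow_pos (hgpos x hx) k
  continuousOn := hh.continuousOn
  pos := hpos
  antitoneOn := hanti
  hasDerivAt _ hx :=
    ((hh.contDiffAt (Ici_mem_nhds hx)).differentiableAt two_ne_zero).hasDerivAt
  hasDerivAt_flux x hx := hasDerivAt_pow_mul_deriv_of_ode_s9 hg hh (Ici_mem_nhds hx)
    (hgpos x (Ioi_subset_Ici_self hx)).ne' (hode x (Ioi_subset_Ici_self hx))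

theorem stmt_9_general (m : ℕ) (hm : 2 ≤ m) (R₀ lam : ℝ) (hlam : 0 < lam)
    (g : ℝ → ℝ)
    (hg : ContDiffOn ℝ 1 g (Set.Ici R₀))
    (hgpos : ∀ r ∈ Set.Ici R₀, 0 < g r)
    (R : ℕ → ℝ)
    (hRtop : Filter.Tendsto R Filter.atTop Filter.atTop)
    (hseq : ℕ → ℝ → ℝ)
    (hseqC2 : ∀ n, ContDiffOn ℝ 2 (hseq n) (Set.Icc R₀ (R n)))
    (hseqnn : ∀ n, ∀ r ∈ Set.Icc R₀ (R n), 0 ≤ hseq n r)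
    (hseqb : ∀ n, hseq n (R n) = 0)
    (hseqode : ∀ n, ∀ r ∈ Set.Icc R₀ (R n),
      deriv (deriv (hseq n)) r + ((m : ℝ) - 1) * (deriv g r / g r) * deriv (hseq n) r
        = lam * hseq n r)
    (h : ℝ → ℝ)
    (hh : ContDiffOn ℝ 2 h (Set.Ici R₀))
    (hhpos : ∀ r ∈ Set.Ici R₀, 0 < h r)
    (hode : ∀ r ∈ Set.Ici R₀,
      deriv (deriv h) r + ((m : ℝ) - 1) * (deriv g r / g r) * deriv h r = lam * h r)
    (hlim : ∀ r ∈ Set.Ici R₀,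
      Filter.Tendsto (fun n => hseq n r) Filter.atTop (nhds (h r))) :
    Filter.Tendsto h Filter.atTop (nhds 0) ↔
      (MeasureTheory.IntegrableOn (fun t => (g t ^ (m - 1))⁻¹) (Set.Ici R₀) ∨
       ¬ MeasureTheory.IntegrableOn (fun t => g t ^ (m - 1)) (Set.Ici R₀) ∨
       ¬ MeasureTheory.IntegrableOn
          (fun r => (∫ t in Set.Ici r, g t ^ (m - 1)) / g r ^ (m - 1)) (Set.Ici R₀)) := by
  have hk : ((m - 1 : ℕ) : ℝ) = (m : ℝ) - 1 := by
    rw [Nat.cast_sub (by omega), Nat.cast_one]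
  have hanti : AntitoneOn h (Ici R₀) :=
    antitoneOn_Ici_of_tendsto hRtop (fun n => antitoneOn_Icc_of_ode hlam.le
      (hg.mono Icc_subset_Ici_self) (fun x hx => hgpos x hx.1) (hseqC2 n) (hseqnn n) (hseqb n)
      fun x hx => by rw [hk]; exact hseqode n x hx) hlim
  have hs : PosAntitoneSolution R₀ lam (fun x => g x ^ (m - 1)) h (deriv h) :=
    .of_ode hlam hg hgpos hh hhpos hanti fun x hx => by rw [hk]; exact hode x hx
  simpa only [integral_Ici_eq_integral_Ioi] using hs.tendsto_zero_iff

/-- radial characterization of the Feller property on model manifolds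
(Theorem `th_model`): the minimal positive solution `h` of the exterior problem,
obtained as limit of the Dirichlet solutions `hseq n`, tends to `0` at infinity
iff `∫ g^{1-m} < ∞`, or `g^{m-1}` is not integrable, or
`∫ (∫_r^∞ g^{m-1})/g^{m-1} = ∞`. -/
theorem stmt_9 (m : ℕ) (hm : 2 ≤ m) (R₀ lam : ℝ) (hR₀ : 0 < R₀) (hlam : 0 < lam)
    (g : ℝ → ℝ)
    (hg : ContDiffOn ℝ 1 g (Set.Ici R₀))
    (hgpos : ∀ r ∈ Set.Ici R₀, 0 < g r)
    (R : ℕ → ℝ) (hRmono : StrictMono R) (hR1 : R₀ < R 1)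
    (hRtop : Filter.Tendsto R Filter.atTop Filter.atTop)
    (hseq : ℕ → ℝ → ℝ)
    (hseqC2 : ∀ n, ContDiffOn ℝ 2 (hseq n) (Set.Icc R₀ (R n)))
    (hseqnn : ∀ n, ∀ r ∈ Set.Icc R₀ (R n), 0 ≤ hseq n r)
    (hseqa : ∀ n, hseq n R₀ = 1)
    (hseqb : ∀ n, hseq n (R n) = 0)
    (hseqode : ∀ n, ∀ r ∈ Set.Icc R₀ (R n),
      deriv (deriv (hseq n)) r + ((m : ℝ) - 1) * (deriv g r / g r) * deriv (hseq n) r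
        = lam * hseq n r)
    (h : ℝ → ℝ)
    (hh : ContDiffOn ℝ 2 h (Set.Ici R₀))
    (hhpos : ∀ r ∈ Set.Ici R₀, 0 < h r)
    (hval : h R₀ = 1)
    (hode : ∀ r ∈ Set.Ici R₀,
      deriv (deriv h) r + ((m : ℝ) - 1) * (deriv g r / g r) * deriv h r = lam * h r)
    (hlim : ∀ r ∈ Set.Ici R₀,
      Filter.Tendsto (fun n => hseq n r) Filter.atTop (nhds (h r))) :
    Filter.Tendsto h Filter.atTop (nhds 0) ↔
      (MeasureTheory.IntegrableOn (fun t => (g t ^ (m - 1))⁻¹) (Set.Ici R₀) ∨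
       ¬ MeasureTheory.IntegrableOn (fun t => g t ^ (m - 1)) (Set.Ici R₀) ∨
       ¬ MeasureTheory.IntegrableOn
          (fun r => (∫ t in Set.Ici r, g t ^ (m - 1)) / g r ^ (m - 1)) (Set.Ici R₀)) :=
  stmt_9_general m hm R₀ lam hlam g hg hgpos R hRtop hseq hseqC2 hseqnn hseqb hseqode h hh hhpos
    hode hlim
end
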